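/- For N ≥ 2, the estimator Ṽ₁ = V₁ + s²/N, where V₁ = N⁻¹ ∑_{n=1}^N f(Xₙ) f(X'ₙ) − μ̂², is unbiased: E[Ṽ₁] = σ_Y². -/

import Mathlib

open MeasureTheory ProbabilityTheory Filter Topology Finset

/-!
Expanding the square of the sample mean shows `s²/N - μ̂² = -(N(N-1))⁻¹ ∑_{i ≠ j} f(Xᵢ) f(Xⱼ)`,
and each of these `N(N-1)` products has expectation `μ²` by independence, so
`E[Ṽ₁] = E[f(X) f(X')] - μ²`. For bounded `g`, conditional independence and equality of the
conditional laws give `E[g(X) g(X')] = E[E[g(X)|𝓖]²]`. Truncating `f` and letting the level go to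
infinity in `L²`, where conditional expectation is a contraction, yields
`E[f(X) f(X')] = E[E[f(X)|𝓖]²] = σ_Y² + μ²`.
-/

section SampleStatistics

variable {N : ℕ}

noncomputable def sampleMean (a : Fin N → ℝ) : ℝ := (N : ℝ)⁻¹ * ∑ n, a n

noncomputable def sampleVariance (a : Fin N → ℝ) : ℝ :=
  ((N : ℝ) - 1)⁻¹ * ∑ n, (a n - sampleMean a) ^ 2

noncomputable def correctedEstimator (a b : Fin N → ℝ) : ℝ :=
  (N : ℝ)⁻¹ * ∑ n, a n * b n - sampleMean a ^ 2 + sampleVariance a / N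

theorem sq_sum_eq_sum_sq_add_sum_offDiag {ι : Type*} [Fintype ι] [DecidableEq ι] (a : ι → ℝ) :
    (∑ i, a i) ^ 2 = ∑ i, a i ^ 2 + ∑ i, ∑ j ∈ univ.erase i, a i * a j := by
  rw [sq, sum_mul_sum, ← sum_add_distrib]
  exact sum_congr rfl fun i _ => by rw [sq, add_sum_erase _ (fun j => a i * a j) (mem_univ i)]

theorem sampleVariance_div_sub_sampleMean_sq (hN : 2 ≤ N) (a : Fin N → ℝ) :
    sampleVariance a / N - sampleMean a ^ 2
      = -(((N : ℝ) * (N - 1))⁻¹ * ∑ i, ∑ j ∈ univ.erase i, a i * a j) := by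
  have hN0 : (N : ℝ) ≠ 0 := by positivity
  have hN1 : (N : ℝ) - 1 ≠ 0 := sub_ne_zero.2 (Nat.cast_ne_one.2 (by omega))
  have hsq := sq_sum_eq_sum_sq_add_sum_offDiag a
  have hdev : ∑ n, (a n - sampleMean a) ^ 2 = ∑ n, a n ^ 2 - (N : ℝ)⁻¹ * (∑ n, a n) ^ 2 := by
    simp only [sub_sq, sum_add_distrib, sum_sub_distrib, ← sum_mul, ← mul_sum, sum_const,
      card_univ, Fintype.card_fin, nsmul_eq_mul, sampleMean]
    field_simp
    ring
  rw [sampleVariance, hdev, sampleMean]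
  field_simp
  linear_combination (-N : ℝ) * hsq

end SampleStatistics

section Estimator

variable {N : ℕ} {Ω : Type*} {m₀ : MeasurableSpace Ω} {P : Measure Ω}

theorem integral_sum_offDiag_mul {A : Fin N → Ω → ℝ} {μ : ℝ} (hA : ∀ n, Integrable (A n) P)
    (hindep : Pairwise fun i j => IndepFun (A i) (A j) P) (hmean : ∀ n, ∫ ω, A n ω ∂P = μ) :
    ∫ ω, ∑ i, ∑ j ∈ univ.erase i, A i ω * A j ω ∂P = N * (N - 1) * μ ^ 2 := by
  have hpair : ∀ i, ∀ j ∈ univ.erase i,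
      Integrable (fun ω => A i ω * A j ω) P ∧ ∫ ω, A i ω * A j ω ∂P = μ ^ 2 := by
    intro i j hj
    have hij := hindep (ne_of_mem_erase hj).symm
    refine ⟨hij.integrable_mul (hA i) (hA j), ?_⟩
    rw [← Pi.mul_def, hij.integral_mul_eq_mul_integral (hA i).1 (hA j).1, hmean, hmean, sq]
  rw [integral_finsetSum _ fun i _ => integrable_finsetSum _ fun j hj => (hpair i j hj).1]
  simp_rw [integral_finsetSum _ fun j hj => (hpair _ j hj).1]
  rw [sum_congr rfl fun i _ => sum_congr rfl fun j hj => (hpair i j hj).2]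
  rcases Nat.eq_zero_or_pos N with rfl | hN
  · simp
  simp [card_erase_of_mem, Nat.cast_pred hN, mul_assoc]

theorem integral_correctedEstimator (hN : 2 ≤ N) {A B : Fin N → Ω → ℝ} {μ c : ℝ}
    (hA : ∀ n, Integrable (A n) P) (hAB : ∀ n, Integrable (fun ω => A n ω * B n ω) P)
    (hindep : Pairwise fun i j => IndepFun (A i) (A j) P) (hmean : ∀ n, ∫ ω, A n ω ∂P = μ)
    (hcross : ∀ n, ∫ ω, A n ω * B n ω ∂P = c) :
    ∫ ω, correctedEstimator (A · ω) (B · ω) ∂P = c - μ ^ 2 := by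
  have hN0 : (N : ℝ) ≠ 0 := by positivity
  have hN1 : (N : ℝ) - 1 ≠ 0 := sub_ne_zero.2 (Nat.cast_ne_one.2 (by omega))
  simp_rw [correctedEstimator, sub_add_eq_add_sub, add_sub_assoc,
    sampleVariance_div_sub_sampleMean_sq hN, ← sub_eq_add_neg]
  have hoff : Integrable (fun ω => ∑ i, ∑ j ∈ univ.erase i, A i ω * A j ω) P :=
    integrable_finsetSum _ fun i _ => integrable_finsetSum _ fun j hj =>
      (hindep (ne_of_mem_erase hj).symm).integrable_mul (hA i) (hA j)
  rw [integral_sub ((integrable_finsetSum _ fun n _ => hAB n).const_mul _) (hoff.const_mul _),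
    integral_const_mul, integral_const_mul, integral_finsetSum _ fun n _ => hAB n,
    integral_sum_offDiag_mul hA hindep hmean]
  simp only [hcross, sum_const, card_univ, Fintype.card_fin, nsmul_eq_mul]
  field_simp

end Estimator

section L2

variable {Ω : Type*} {m m₀ : MeasurableSpace Ω} {P : Measure Ω}

theorem integral_mul_eq_inner_toLp {u v : Ω → ℝ} (hu : MemLp u 2 P) (hv : MemLp v 2 P) :
    ∫ ω, u ω * v ω ∂P = inner ℝ (hu.toLp u) (hv.toLp v) := by
  rw [L2.inner_def]
  refine integral_congr_ae ?_
  filter_upwards [hu.coeFn_toLp, hv.coeFn_toLp] with ω hu hv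
  simp [hu, hv, mul_comm]

theorem tendsto_integral_mul_of_tendsto_eLpNorm {ι : Type*} {l : Filter ι}
    {u v : ι → Ω → ℝ} {u₀ v₀ : Ω → ℝ} (hu : ∀ i, MemLp (u i) 2 P) (hv : ∀ i, MemLp (v i) 2 P)
    (hu₀ : MemLp u₀ 2 P) (hv₀ : MemLp v₀ 2 P)
    (hu_lim : Tendsto (fun i => eLpNorm (u i - u₀) 2 P) l (𝓝 0))
    (hv_lim : Tendsto (fun i => eLpNorm (v i - v₀) 2 P) l (𝓝 0)) :
    Tendsto (fun i => ∫ ω, u i ω * v i ω ∂P) l (𝓝 (∫ ω, u₀ ω * v₀ ω ∂P)) := by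
  simp only [integral_mul_eq_inner_toLp (hu _) (hv _), integral_mul_eq_inner_toLp hu₀ hv₀]
  exact ((Lp.tendsto_Lp_iff_tendsto_eLpNorm'' _ hu _ hu₀).2 hu_lim).inner
    ((Lp.tendsto_Lp_iff_tendsto_eLpNorm'' _ hv _ hv₀).2 hv_lim)

theorem tendsto_eLpNorm_condExp_sub {ι : Type*} {l : Filter ι} {p : ENNReal} (hp : 1 ≤ p)
    {u : ι → Ω → ℝ} {u₀ : Ω → ℝ} (hu : ∀ i, Integrable (u i) P) (hu₀ : Integrable u₀ P)
    (hu_lim : Tendsto (fun i => eLpNorm (u i - u₀) p P) l (𝓝 0)) :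
    Tendsto (fun i => eLpNorm (P[u i|m] - P[u₀|m]) p P) l (𝓝 0) := by
  refine tendsto_of_tendsto_of_tendsto_of_le_of_le tendsto_const_nhds hu_lim (fun _ => zero_le)
    fun i => ?_
  rw [← eLpNorm_congr_ae (condExp_sub (hu i) hu₀ m)]
  exact eLpNorm_condExp_le_eLpNorm _ hp

theorem unifIntegrable_of_norm_le {ι β : Type*} [NormedAddCommGroup β] {p : ENNReal}
    (hp : 1 ≤ p) (hp' : p ≠ ⊤) {u : ι → Ω → β} {g : Ω → β} (hg : MemLp g p P)
    (hu : ∀ i ω, ‖u i ω‖ ≤ ‖g ω‖) : UnifIntegrable u p P := by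
  intro ε hε
  obtain ⟨δ, hδ, hg_small⟩ := unifIntegrable_const (ι := Unit) hp hp' hg hε
  refine ⟨δ, hδ, fun i s hs hPs => (eLpNorm_mono fun ω => ?_).trans (hg_small () s hs hPs)⟩
  by_cases hω : ω ∈ s <;> simp [hω, hu i ω]

theorem tendsto_eLpNorm_truncation_sub [IsFiniteMeasure P] {p : ENNReal} (hp : 1 ≤ p)
    (hp' : p ≠ ⊤) {h : Ω → ℝ} (hh : MemLp h p P) :
    Tendsto (fun k : ℕ => eLpNorm (truncation h k - h) p P) atTop (𝓝 0) := by
  refine tendsto_Lp_finite_of_tendsto_ae hp hp' (fun _ => hh.1.truncation) hh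
    (unifIntegrable_of_norm_le hp hp' hh fun k => abs_truncation_le_abs_self h k)
    (ae_of_all _ fun ω => tendsto_const_nhds.congr' ?_)
  filter_upwards [eventually_gt_atTop ⌈|h ω|⌉₊] with k hk
  exact (truncation_eq_self (Nat.lt_of_ceil_lt hk)).symm

theorem integral_comp_mul_comp_eq_integral_condExp_mul_self [IsFiniteMeasure P] {F : Type*}
    [MeasurableSpace F] (hm : m ≤ m₀) {X X' : Ω → F} {f : F → ℝ}
    (hX : Measurable X) (hX' : Measurable X') (hf : Measurable f)
    (hL2 : MemLp (fun ω => f (X ω)) 2 P) (hL2' : MemLp (fun ω => f (X' ω)) 2 P)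
    (hCondIndep : ∀ g : F → ℝ, Measurable g → (∃ C, ∀ x, |g x| ≤ C) →
      P[(fun ω => g (X ω) * g (X' ω))|m]
        =ᵐ[P] fun ω => P[(fun ω' => g (X ω'))|m] ω * P[(fun ω' => g (X' ω'))|m] ω)
    (hSameCondDist : ∀ g : F → ℝ, Measurable g → (∃ C, ∀ x, |g x| ≤ C) →
      P[(fun ω => g (X ω))|m] =ᵐ[P] P[(fun ω => g (X' ω))|m]) :
    ∫ ω, f (X ω) * f (X' ω) ∂P
      = ∫ ω, P[(fun ω' => f (X ω'))|m] ω * P[(fun ω' => f (X ω'))|m] ω ∂P := by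
  have ht_meas : ∀ k : ℕ, Measurable (truncation f k) :=
    fun k => (measurable_id.indicator measurableSet_Ioc).comp hf
  have ht_bdd : ∀ k : ℕ, ∃ C, ∀ x, |truncation f k x| ≤ C :=
    fun k => ⟨_, abs_truncation_le_bound f k⟩
  have ht_L2 : ∀ {Z : Ω → F}, Measurable Z → ∀ k : ℕ, MemLp (fun ω => truncation f k (Z ω)) 2 P :=
    fun {Z} hZ k => MemLp.of_bound ((ht_meas k).comp hZ).aestronglyMeasurable _
      (ae_of_all _ fun ω => abs_truncation_le_bound f k (Z ω))
  have h_trunc : ∀ k : ℕ, ∫ ω, truncation f k (X ω) * truncation f k (X' ω) ∂P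
      = ∫ ω, P[(fun ω' => truncation f k (X ω'))|m] ω
          * P[(fun ω' => truncation f k (X ω'))|m] ω ∂P := by
    intro k
    rw [← integral_condExp hm]
    refine integral_congr_ae ?_
    filter_upwards [hCondIndep _ (ht_meas k) (ht_bdd k), hSameCondDist _ (ht_meas k) (ht_bdd k)]
      with ω h_indep h_same
    rw [h_indep, h_same]
  have hlim : Tendsto
      (fun k : ℕ => eLpNorm ((fun ω => truncation f k (X ω)) - fun ω => f (X ω)) 2 P)
      atTop (𝓝 0) := tendsto_eLpNorm_truncation_sub one_le_two (by simp) hL2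
  have hlim' : Tendsto
      (fun k : ℕ => eLpNorm ((fun ω => truncation f k (X' ω)) - fun ω => f (X' ω)) 2 P)
      atTop (𝓝 0) := tendsto_eLpNorm_truncation_sub one_le_two (by simp) hL2'
  have hlim_condExp := tendsto_eLpNorm_condExp_sub (m := m) one_le_two
    (fun k => (ht_L2 hX k).integrable one_le_two) (hL2.integrable one_le_two) hlim
  have hT_L2 : ∀ k : ℕ, MemLp (P[(fun ω => truncation f k (X ω))|m]) 2 P :=
    fun k => (ht_L2 hX k).condExp one_le_two
  refine tendsto_nhds_unique ((tendsto_integral_mul_of_tendsto_eLpNorm (ht_L2 hX) (ht_L2 hX')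
    hL2 hL2' hlim hlim').congr h_trunc) ?_
  exact tendsto_integral_mul_of_tendsto_eLpNorm hT_L2 hT_L2 (hL2.condExp one_le_two)
    (hL2.condExp one_le_two) hlim_condExp hlim_condExp

end L2

theorem corrected_estimator_V1_unbiased
    {Ω E F : Type*} (𝓖 : MeasurableSpace Ω)
    [MeasurableSpace Ω] [MeasurableSpace E] [MeasurableSpace F]
    (P : Measure Ω) [IsProbabilityMeasure P]
    (Y : Ω → E) (X X' : Ω → F) (f : F → ℝ)
    (hY : Measurable Y) (hX : Measurable X) (hX' : Measurable X') (hf : Measurable f)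
    (hL2 : MemLp (fun ω => f (X ω)) 2 P) (hL2' : MemLp (fun ω => f (X' ω)) 2 P)
    (h𝓖 : 𝓖 = MeasurableSpace.comap Y inferInstance)
    -- conditional independence of `X` and `X'` given `𝓖 = σ(Y)`
    (hCondIndep : ∀ g h : F → ℝ, Measurable g → Measurable h →
      (∃ C, ∀ x, |g x| ≤ C) → (∃ C, ∀ x, |h x| ≤ C) →
      P[(fun ω => g (X ω) * h (X' ω))|𝓖]
        =ᵐ[P] fun ω => ((P[(fun ω' => g (X ω'))|𝓖]) ω) * ((P[(fun ω' => h (X' ω'))|𝓖]) ω))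
    -- `X` and `X'` have the same conditional distribution given `𝓖`
    (hSameCondDist : ∀ g : F → ℝ, Measurable g → (∃ C, ∀ x, |g x| ≤ C) →
      P[(fun ω => g (X ω))|𝓖] =ᵐ[P] P[(fun ω => g (X' ω))|𝓖])
    (σY2 : ℝ)
    (hσY2 : σY2 = variance (P[(fun ω => f (X ω))|𝓖]) P)
    (N : ℕ) (hN : 2 ≤ N)
    -- i.i.d. sample triples `(Yₙ, Xₙ, X'ₙ)` with the same joint distribution as `(Y, X, X')`
    (Ys : Fin N → Ω → E) (Xs Xs' : Fin N → Ω → F)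
    (hYs : ∀ n, Measurable (Ys n)) (hXs : ∀ n, Measurable (Xs n)) (hXs' : ∀ n, Measurable (Xs' n))
    (hIndep : iIndepFun (fun n ω => (Ys n ω, Xs n ω, Xs' n ω)) P)
    (hIdent : ∀ n, Measure.map (fun ω => (Ys n ω, Xs n ω, Xs' n ω)) P
        = Measure.map (fun ω => (Y ω, X ω, X' ω)) P)
    (muHat : Ω → ℝ)
    (hmuHat : ∀ ω, muHat ω = (N : ℝ)⁻¹ * ∑ n, f (Xs n ω))
    (s2 : Ω → ℝ)
    (hs2 : ∀ ω, s2 ω = ((N : ℝ) - 1)⁻¹ * ∑ n, (f (Xs n ω) - muHat ω) ^ 2)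
    :
    ∫ ω, (((N : ℝ)⁻¹ * ∑ n, f (Xs n ω) * f (Xs' n ω) - muHat ω ^ 2) + s2 ω / (N : ℝ)) ∂P = σY2 := by
  obtain rfl : muHat = fun ω => sampleMean fun n => f (Xs n ω) := funext hmuHat
  obtain rfl : s2 = fun ω => sampleVariance fun n => f (Xs n ω) := funext hs2
  change ∫ ω, correctedEstimator (fun n => f (Xs n ω)) (fun n => f (Xs' n ω)) ∂P = σY2
  have hm : 𝓖 ≤ ‹MeasurableSpace Ω› := h𝓖 ▸ hY.comap_le
  have hident : ∀ n, IdentDistrib (fun ω => (Ys n ω, Xs n ω, Xs' n ω))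
      (fun ω => (Y ω, X ω, X' ω)) P P := fun n =>
    ⟨((hYs n).prodMk ((hXs n).prodMk (hXs' n))).aemeasurable,
      (hY.prodMk (hX.prodMk hX')).aemeasurable, hIdent n⟩
  have hfst : Measurable fun p : E × F × F => f p.2.1 := by fun_prop
  have hsnd : Measurable fun p : E × F × F => f p.2.2 := by fun_prop
  have hint : ∀ n, Integrable (fun ω => f (Xs n ω)) P :=
    fun n => ((hident n).comp hfst).integrable_iff.2 (hL2.integrable one_le_two)
  have hint_mul : ∀ n, Integrable (fun ω => f (Xs n ω) * f (Xs' n ω)) P :=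
    fun n => ((hident n).comp (hfst.mul hsnd)).integrable_iff.2 (hL2.integrable_mul hL2')
  have hmean : ∀ n, ∫ ω, f (Xs n ω) ∂P = ∫ ω, f (X ω) ∂P :=
    fun n => ((hident n).comp hfst).integral_eq
  have hmean_mul : ∀ n, ∫ ω, f (Xs n ω) * f (Xs' n ω) ∂P = ∫ ω, f (X ω) * f (X' ω) ∂P :=
    fun n => ((hident n).comp (hfst.mul hsnd)).integral_eq
  have hindep : Pairwise fun i j => IndepFun (fun ω => f (Xs i ω)) (fun ω => f (Xs j ω)) P :=
    fun i j hij => (hIndep.indepFun hij).comp hfst hfst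
  rw [integral_correctedEstimator hN hint hint_mul hindep hmean hmean_mul, hσY2,
    variance_eq_sub (hL2.condExp one_le_two), integral_condExp hm,
    integral_comp_mul_comp_eq_integral_condExp_mul_self hm hX hX' hf hL2 hL2'
      (fun g hg hgC => hCondIndep g g hg hg hgC hgC) hSameCondDist]
  simp [sq]
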